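/- Let D be a dimension function satisfying the regularized Boltzmann entropy hypothesis with S̃ strictly increasing in each coordinate, and let a, a' ∈ ℝ^{L+1} with a > 0 and a' > 0. If S̃ a > S̃ a', then there exists δ ∈ Δ such that for every δ' ∈ Δ the following holds for all sufficiently large X: D_{a,δ}(X) ≥ 1, and if D_{a',δ'}(X) ≥ 1, then every summable q : ℕ → ℝ with q i ≥ 0 for all i, Σ_i q i = 1, and q i ≤ 1/D_{a,δ}(X) for all i satisfies T(q, D_{a',δ'}(X)) ≥ 1/3. (This is the impossibility half of Theorem 1: any output of a unital channel applied to π^{(X)}_{a,δ_X} has eigenvalue distribution q with max q ≤ 1/D_{a,δ}(X), hence stays at trace distance at least 1/3 from π^{(X)}_{a',δ'_X}.) -/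

import Mathlib

/-! Since `S̃ a' < S̃ a`, continuity gives `ε > 0` with `S̃((1+ε)•a') < S̃ a`, so `D_X(a)` outgrows
`D_X((1+ε)•a')`, which bounds the target shell dimension once `δ'_X ≤ ε`: eventually
`3 D_{a',δ'}(X) ≤ D_X(a)`. Strict monotonicity gives `2 D_X((1-δ)•a) ≤ D_X(a)` eventually for each
fixed `δ`, and a diagonal argument keeps this along some `δ_X → 0`; then `D_X(a) ≤ 2 D_{a,δ}(X)`.
A distribution with weights at most `1/D_{a,δ}(X)` thus puts mass at most `2/3` on the first
`D_{a',δ'}(X)` points, which forces total variation distance at least `1/3` from uniform on them.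
-/

open Filter Topology

/-- A dimension function: `D X b ≥ 1` for `X ≥ 1`, and monotone in `b` coordinatewise. -/
def IsDimFun (L : ℕ) (D : ℕ → (Fin (L + 1) → ℝ) → ℕ) : Prop :=
  (∀ X : ℕ, 1 ≤ X → ∀ b : Fin (L + 1) → ℝ, 1 ≤ D X b) ∧
  (∀ X : ℕ, ∀ b c : Fin (L + 1) → ℝ, (∀ i, b i ≤ c i) → D X b ≤ D X c)

/-- Membership in `Δ`: a positive sequence tending to `0`. -/
def IsDelta (δ : ℕ → ℝ) : Prop :=
  (∀ X : ℕ, 0 < δ X) ∧ Tendsto δ atTop (nhds 0)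

/-- The shell dimension `D_{a,δ}(X)`. -/
def shellDim (L : ℕ) (D : ℕ → (Fin (L + 1) → ℝ) → ℕ) (a : Fin (L + 1) → ℝ)
    (δ : ℕ → ℝ) (X : ℕ) : ℕ :=
  D X (fun i => (1 + δ X) * a i) - D X (fun i => (1 - δ X) * a i)

/-- The regularized Boltzmann entropy hypothesis: `S` is continuous and
`(1/X) log (D X b) → S b` for every `b > 0`. -/
def RegBoltz (L : ℕ) (D : ℕ → (Fin (L + 1) → ℝ) → ℕ) (S : (Fin (L + 1) → ℝ) → ℝ) : Prop :=
  Continuous S ∧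
  ∀ b : Fin (L + 1) → ℝ, (∀ i, 0 < b i) →
    Tendsto (fun X : ℕ => Real.log (D X b) / X) atTop (nhds (S b))

/-- `S` is strictly increasing in each coordinate on the positive orthant. -/
def StrictInc (L : ℕ) (S : (Fin (L + 1) → ℝ) → ℝ) : Prop :=
  ∀ b c : Fin (L + 1) → ℝ, (∀ i, 0 < b i) → (∀ i, 0 < c i) →
    (∀ i, b i ≤ c i) → b ≠ c → S b < S c

/-- `S̄(a)`: sup over `δ ∈ Δ` of the limsup of `(1/X) log D_{a,δ}(X)`, in the extended reals. -/
noncomputable def SbarSup (L : ℕ) (D : ℕ → (Fin (L + 1) → ℝ) → ℕ) (a : Fin (L + 1) → ℝ) : EReal :=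
  ⨆ δ : {δ : ℕ → ℝ // IsDelta δ},
    Filter.limsup (fun X : ℕ => ((Real.log (shellDim L D a δ.1 X) / X : ℝ) : EReal)) atTop

/-- `S̲(a)`: sup over `δ ∈ Δ` of the liminf of `(1/X) log D_{a,δ}(X)`, in the extended reals. -/
noncomputable def SbarInf (L : ℕ) (D : ℕ → (Fin (L + 1) → ℝ) → ℕ) (a : Fin (L + 1) → ℝ) : EReal :=
  ⨆ δ : {δ : ℕ → ℝ // IsDelta δ},
    Filter.liminf (fun X : ℕ => ((Real.log (shellDim L D a δ.1 X) / X : ℝ) : EReal)) atTop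

/-- Total variation distance between the distribution `q` on `ℕ` and the uniform
distribution on `{0, …, d-1}`. -/
noncomputable def TVu (q : ℕ → ℝ) (d : ℕ) : ℝ :=
  (1 / 2) * (∑ i ∈ Finset.range d, |q i - 1 / (d : ℝ)|) + (1 / 2) * (∑' i : ℕ, q (i + d))

theorem tendsto_div_atTop_of_tendsto_log_div {f g : ℕ → ℝ} {u v : ℝ} (huv : u < v)
    (hf0 : ∀ᶠ X in atTop, 0 < f X) (hg0 : ∀ᶠ X in atTop, 0 < g X)
    (hf : Tendsto (fun X : ℕ => Real.log (f X) / X) atTop (𝓝 u))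
    (hg : Tendsto (fun X : ℕ => Real.log (g X) / X) atTop (𝓝 v)) :
    Tendsto (fun X => g X / f X) atTop atTop := by
  have hlog : Tendsto (fun X : ℕ => (X : ℝ) * (Real.log (g X) / X - Real.log (f X) / X))
      atTop atTop :=
    tendsto_natCast_atTop_atTop.atTop_mul_pos (sub_pos.2 huv) (hg.sub hf)
  refine (Real.tendsto_exp_atTop.comp hlog).congr' ?_
  filter_upwards [hf0, hg0, eventually_ge_atTop 1] with X hfX hgX hX
  have hX0 : (X : ℝ) ≠ 0 := by positivity
  rw [Function.comp_apply, mul_sub, mul_div_cancel₀ _ hX0, mul_div_cancel₀ _ hX0,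
    ← Real.log_div hgX.ne' hfX.ne', Real.exp_log (div_pos hgX hfX)]

theorem exists_tendsto_atTop_eventually_diag {P : ℕ → ℕ → Prop}
    (h : ∀ k, ∀ᶠ X in atTop, P k X) :
    ∃ K : ℕ → ℕ, Tendsto K atTop atTop ∧ ∀ᶠ X in atTop, P (K X) X := by
  classical
  choose N hN using fun k => eventually_atTop.mp (h k)
  -- `K X` is the largest `k ≤ X` whose threshold `N k` has already been passed.
  refine ⟨fun X => Nat.findGreatest (fun k => N k ≤ X) X, ?_, ?_⟩
  · refine tendsto_atTop_atTop.mpr fun k => ⟨max k (N k), fun X hX => ?_⟩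
    exact Nat.le_findGreatest (le_of_max_le_left hX) (le_of_max_le_right hX)
  · filter_upwards [eventually_ge_atTop (N 0)] with X hX
    exact hN _ _ (Nat.findGreatest_spec (P := fun k => N k ≤ X) (Nat.zero_le X) hX)

theorem Continuous.exists_pos_dilate_lt {ι : Type*} {S : (ι → ℝ) → ℝ} (hS : Continuous S)
    {b : ι → ℝ} {s : ℝ} (hb : S b < s) : ∃ ε > 0, S (fun i => (1 + ε) * b i) < s := by
  have hdilate : Continuous fun t : ℝ => S (fun i => (1 + t) * b i) := by fun_prop
  have hnear : ∀ᶠ t in 𝓝 (0 : ℝ), S (fun i => (1 + t) * b i) < s :=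
    hdilate.continuousAt.eventually_lt continuousAt_const (by simpa using hb)
  obtain ⟨ε, hε, hεpos⟩ :=
    ((hnear.filter_mono nhdsWithin_le_nhds).and (self_mem_nhdsWithin (s := Set.Ioi 0))).exists
  exact ⟨ε, hεpos, hε⟩

theorem one_sub_sum_range_le_TVu {q : ℕ → ℝ} (hq : Summable q) (hq1 : ∑' i, q i = 1)
    {d : ℕ} (hd : d ≠ 0) :
    1 - ∑ i ∈ Finset.range d, q i ≤ TVu q d := by
  have htail : ∑' i, q (i + d) = 1 - ∑ i ∈ Finset.range d, q i := by
    linarith [hq.sum_add_tsum_nat_add d]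
  have hhead : 1 - ∑ i ∈ Finset.range d, q i ≤ ∑ i ∈ Finset.range d, |q i - 1 / (d : ℝ)| :=
    calc 1 - ∑ i ∈ Finset.range d, q i = ∑ i ∈ Finset.range d, (1 / (d : ℝ) - q i) := by
          rw [Finset.sum_sub_distrib, Finset.sum_const, Finset.card_range, nsmul_eq_mul,
            mul_one_div_cancel (Nat.cast_ne_zero.2 hd)]
      _ ≤ ∑ i ∈ Finset.range d, |q i - 1 / (d : ℝ)| :=
          Finset.sum_le_sum fun i _ => abs_sub_comm (q i) _ ▸ le_abs_self _
  rw [TVu, htail]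
  linarith

theorem one_third_le_TVu {q : ℕ → ℝ} (hq : Summable q) (hq1 : ∑' i, q i = 1)
    {d N : ℕ} (hd : 1 ≤ d) (hdN : 3 * d ≤ 2 * N) (hqN : ∀ i, q i ≤ 1 / (N : ℝ)) :
    1 / 3 ≤ TVu q d := by
  have hN : (0 : ℝ) < N := by exact_mod_cast (show 0 < N by omega)
  have hhead : ∑ i ∈ Finset.range d, q i ≤ 2 / 3 :=
    calc ∑ i ∈ Finset.range d, q i ≤ ∑ _i ∈ Finset.range d, 1 / (N : ℝ) :=
          Finset.sum_le_sum fun i _ => hqN i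
      _ = d / N := by rw [Finset.sum_const, Finset.card_range, nsmul_eq_mul, mul_one_div]
      _ ≤ 2 / 3 := by
          rw [div_le_div_iff₀ hN (by norm_num)]
          exact_mod_cast (by omega : d * 3 ≤ 2 * N)
  linarith [one_sub_sum_range_le_TVu hq hq1 (by omega : d ≠ 0)]

section DimFun

variable {L : ℕ} {D : ℕ → (Fin (L + 1) → ℝ) → ℕ} {S : (Fin (L + 1) → ℝ) → ℝ}

theorem StrictInc.apply_mul_lt (hS : StrictInc L S) {a : Fin (L + 1) → ℝ} (ha : ∀ i, 0 < a i)
    {t : ℝ} (ht0 : 0 < t) (ht1 : t < 1) :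
    S (fun i => t * a i) < S a := by
  refine hS _ _ (fun i => mul_pos ht0 (ha i)) ha
    (fun i => mul_le_of_le_one_left (ha i).le ht1.le)
    fun h => (mul_lt_of_lt_one_left (ha 0) ht1).ne (congrFun h 0)

theorem RegBoltz.eventually_mul_le (hD : IsDimFun L D) (hS : RegBoltz L D S)
    {b c : Fin (L + 1) → ℝ} (hb : ∀ i, 0 < b i) (hc : ∀ i, 0 < c i) (hbc : S b < S c) (n : ℕ) :
    ∀ᶠ X in atTop, n * D X b ≤ D X c := by
  have hpos : ∀ e, ∀ᶠ X in atTop, (0 : ℝ) < D X e := fun e =>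
    (eventually_ge_atTop 1).mono fun X hX => by exact_mod_cast hD.1 X hX e
  have hratio := tendsto_div_atTop_of_tendsto_log_div hbc (hpos b) (hpos c)
    (hS.2 b hb) (hS.2 c hc)
  filter_upwards [hratio.eventually_ge_atTop (n : ℝ), hpos b] with X hX hbX
  exact_mod_cast (le_div_iff₀ hbX).1 hX

theorem le_two_mul_shellDim (hD : IsDimFun L D) {a : Fin (L + 1) → ℝ} (ha : ∀ i, 0 ≤ a i)
    {δ : ℕ → ℝ} {X : ℕ} (hδ : 0 ≤ δ X) (hinner : 2 * D X (fun i => (1 - δ X) * a i) ≤ D X a) :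
    D X a ≤ 2 * shellDim L D a δ X := by
  have houter : D X a ≤ D X (fun i => (1 + δ X) * a i) :=
    hD.2 X _ _ fun i => le_mul_of_one_le_left (ha i) (by linarith)
  unfold shellDim
  omega

theorem shellDim_le (hD : IsDimFun L D) {a : Fin (L + 1) → ℝ} (ha : ∀ i, 0 ≤ a i)
    {δ : ℕ → ℝ} {X : ℕ} {ε : ℝ} (hδ : δ X ≤ ε) :
    shellDim L D a δ X ≤ D X (fun i => (1 + ε) * a i) :=
  (Nat.sub_le _ _).trans <| hD.2 X _ _ fun i => mul_le_mul_of_nonneg_right (by linarith) (ha i)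

end DimFun

/-- Impossibility half of Theorem 1: if `S̃ a > S̃ a'`, some `δ ∈ Δ` makes every
distribution majorized by the initial microcanonical state stay at total variation
distance at least `1/3` from the target microcanonical distribution. -/
theorem stmt_4 {L : ℕ} (D : ℕ → (Fin (L + 1) → ℝ) → ℕ) (S : (Fin (L + 1) → ℝ) → ℝ)
    (hD : IsDimFun L D) (hS : RegBoltz L D S) (hSI : StrictInc L S)
    (a a' : Fin (L + 1) → ℝ) (ha : ∀ i, 0 < a i) (ha' : ∀ i, 0 < a' i)
    (hgt : S a' < S a) :
    ∃ δ : ℕ → ℝ, IsDelta δ ∧ ∀ δ' : ℕ → ℝ, IsDelta δ' →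
      ∃ X₀ : ℕ, ∀ X ≥ X₀,
        1 ≤ shellDim L D a δ X ∧
        (1 ≤ shellDim L D a' δ' X →
          ∀ q : ℕ → ℝ, Summable q → (∀ i, 0 ≤ q i) → (∑' i, q i) = 1 →
            (∀ i, q i ≤ 1 / (shellDim L D a δ X : ℝ)) →
            (1 : ℝ) / 3 ≤ TVu q (shellDim L D a' δ' X)) := by
  obtain ⟨ε, hε, hεS⟩ := hS.1.exists_pos_dilate_lt hgt
  have hshrink (k : ℕ) : ∀ᶠ X in atTop,
      2 * D X (fun i => (1 - 1 / ((k : ℝ) + 2)) * a i) ≤ D X a := by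
    have hk : 1 / ((k : ℝ) + 2) < 1 := by rw [div_lt_one (by positivity)]; linarith
    exact hS.eventually_mul_le hD (fun i => mul_pos (by linarith) (ha i)) ha
      (hSI.apply_mul_lt ha (by linarith) (by simp only [sub_lt_self_iff]; positivity)) 2
  obtain ⟨K, hK, hKshrink⟩ := exists_tendsto_atTop_eventually_diag hshrink
  refine ⟨fun X => 1 / ((K X : ℝ) + 2), ⟨fun X => by positivity, ?_⟩, fun δ' hδ' => ?_⟩
  · exact tendsto_const_nhds.div_atTop
      (tendsto_atTop_add_const_right _ 2 (tendsto_natCast_atTop_atTop.comp hK))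
  have hgrow := hS.eventually_mul_le hD (fun i => mul_pos (by linarith) (ha' i)) ha hεS 3
  obtain ⟨X₀, hX₀⟩ := eventually_atTop.mp <| hKshrink.and <| hgrow.and <|
    (hδ'.2.eventually (eventually_le_nhds hε)).and (eventually_ge_atTop 1)
  refine ⟨X₀, fun X hX => ?_⟩
  obtain ⟨hinner, hgrowX, hδ'X, hX1⟩ := hX₀ X hX
  have hlow := le_two_mul_shellDim (δ := fun X => 1 / ((K X : ℝ) + 2)) hD (fun i => (ha i).le)
    (by positivity) hinner
  have hup := shellDim_le hD (fun i => (ha' i).le) hδ'X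
  have hpos := hD.1 X hX1 (fun i => (1 + ε) * a' i)
  exact ⟨by omega, fun hd q hq _ hq1 hqN => one_third_le_TVu hq hq1 hd (by omega) hqN⟩
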